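/- arXiv:1003.4699 — 5 statements merged into one kernel-verified Lean document; each statement's English description precedes it below -/
import Mathlib

section
/- Let g be a formal power series with nonnegative real coefficients and g(0) = 0. Then there exists a unique formal power series f with f(0) = 0 satisfying f(z) = z·exp(g(f(z))), and f has nonnegative coefficients. -/
/-!
The map `f ↦ X · exp(g(f))` is a contraction for the `X`-adic metric: multiplication by `X`
shifts coefficients up by one, while the coefficient of order `n` of a composition only sees
coefficients of order `≤ n`. Its iterates from `0` therefore stabilise coefficientwise to the
unique fixed point, and they keep coefficients nonnegative since sums, products and
compositions of series with nonnegative coefficients do.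
-/

open PowerSeries

/-- Composition `f ∘ g` of formal power series (meaningful when `g` has zero constant
term): the coefficient of order `n` only involves `g^k` for `k ≤ n`. -/
noncomputable def psComp (f g : PowerSeries ℝ) : PowerSeries ℝ :=
  PowerSeries.mk fun n =>
    PowerSeries.coeff n (∑ k ∈ Finset.range (n + 1), PowerSeries.C (PowerSeries.coeff k f) * g ^ k)

open Function

def PowerSeries.CoeffContracting {R : Type*} [Semiring R] (Φ : R⟦X⟧ → R⟦X⟧) : Prop :=
  ∀ n f f', (∀ i < n, coeff i f = coeff i f') → coeff n (Φ f) = coeff n (Φ f')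

namespace PowerSeries.CoeffContracting

variable {R : Type*} [Semiring R] {Φ : R⟦X⟧ → R⟦X⟧}

theorem coeff_iterate_eq_of_le (hΦ : CoeffContracting Φ) {n m : ℕ} (hnm : n ≤ m) {i : ℕ}
    (hi : i < n) : coeff i (Φ^[m] 0) = coeff i (Φ^[n] 0) := by
  induction n generalizing m i with
  | zero => omega
  | succ n ih =>
    obtain ⟨m, rfl⟩ : ∃ m', m = m' + 1 := ⟨m - 1, by omega⟩
    rw [iterate_succ_apply', iterate_succ_apply']
    exact hΦ i _ _ fun j hj => ih (by omega) (by omega)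

theorem coeff_iterate_eq_of_isFixedPt (hΦ : CoeffContracting Φ) {f : R⟦X⟧}
    (hf : IsFixedPt Φ f) {i m : ℕ} (hi : i < m) : coeff i (Φ^[m] 0) = coeff i f := by
  induction m generalizing i with
  | zero => omega
  | succ m ih =>
    rw [iterate_succ_apply', ← hf.eq]
    exact hΦ i _ _ fun j hj => ih (by omega)

theorem exists_isFixedPt (hΦ : CoeffContracting Φ) : ∃ f, IsFixedPt Φ f := by
  refine ⟨mk fun n => coeff n (Φ^[n + 1] 0), ?_⟩
  ext n
  rw [coeff_mk, iterate_succ_apply']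
  refine hΦ n _ _ fun j hj => ?_
  rw [coeff_mk, hΦ.coeff_iterate_eq_of_le hj (Nat.lt_succ_self j)]

theorem existsUnique_isFixedPt (hΦ : CoeffContracting Φ) : ∃! f, IsFixedPt Φ f := by
  obtain ⟨f, hf⟩ := hΦ.exists_isFixedPt
  refine ⟨f, hf, fun f' hf' => ?_⟩
  ext n
  rw [← hΦ.coeff_iterate_eq_of_isFixedPt hf (Nat.lt_succ_self n),
    hΦ.coeff_iterate_eq_of_isFixedPt hf' (Nat.lt_succ_self n)]

theorem coeff_nonneg_of_isFixedPt [Preorder R] (hΦ : CoeffContracting Φ)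
    (hnonneg : ∀ f, (∀ n, 0 ≤ coeff n f) → ∀ n, 0 ≤ coeff n (Φ f)) {f : R⟦X⟧}
    (hf : IsFixedPt Φ f) (n : ℕ) : 0 ≤ coeff n f := by
  have hiter : ∀ m n, 0 ≤ coeff n (Φ^[m] 0) := by
    intro m
    induction m with
    | zero => simp
    | succ m ih => rw [iterate_succ_apply']; exact hnonneg _ ih
  rw [← hΦ.coeff_iterate_eq_of_isFixedPt hf (Nat.lt_succ_self n)]
  exact hiter _ n

end PowerSeries.CoeffContracting

theorem PowerSeries.coeff_pow_congr {R : Type*} [CommRing R] {B B' : R⟦X⟧} {n : ℕ}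
    (h : ∀ i ≤ n, coeff i B = coeff i B') (k : ℕ) : coeff n (B ^ k) = coeff n (B' ^ k) := by
  have hB : (X : R⟦X⟧) ^ (n + 1) ∣ B - B' :=
    X_pow_dvd_iff.mpr fun i hi => by rw [map_sub, h i (by omega), sub_self]
  have hBk := X_pow_dvd_iff.mp (hB.trans (sub_dvd_pow_sub_pow B B' k)) n (Nat.lt_succ_self n)
  rwa [map_sub, sub_eq_zero] at hBk

theorem PowerSeries.coeff_pow_nonneg {R : Type*} [CommSemiring R] [PartialOrder R]
    [IsOrderedRing R] {B : R⟦X⟧} (hB : ∀ i, 0 ≤ coeff i B) (k n : ℕ) :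
    0 ≤ coeff n (B ^ k) := by
  induction k generalizing n with
  | zero => rw [pow_zero, coeff_one]; split_ifs <;> simp
  | succ k ih =>
    rw [pow_succ, coeff_mul]
    exact Finset.sum_nonneg fun p _ => mul_nonneg (ih p.1) (hB p.2)

theorem coeff_psComp (A B : PowerSeries ℝ) (n : ℕ) :
    coeff n (psComp A B) = ∑ k ∈ Finset.range (n + 1), coeff k A * coeff n (B ^ k) := by
  simp [psComp]

theorem coeff_psComp_congr (A : PowerSeries ℝ) {B B' : PowerSeries ℝ} {n : ℕ}
    (h : ∀ i ≤ n, coeff i B = coeff i B') : coeff n (psComp A B) = coeff n (psComp A B') := by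
  simp only [coeff_psComp, coeff_pow_congr h]

theorem coeff_psComp_nonneg {A B : PowerSeries ℝ} (hA : ∀ i, 0 ≤ coeff i A)
    (hB : ∀ i, 0 ≤ coeff i B) (n : ℕ) : 0 ≤ coeff n (psComp A B) := by
  rw [coeff_psComp]
  exact Finset.sum_nonneg fun k _ => mul_nonneg (hA k) (coeff_pow_nonneg hB k n)

theorem coeffContracting_X_mul_psComp_exp_psComp (g : PowerSeries ℝ) :
    CoeffContracting fun f => X * psComp (exp ℝ) (psComp g f) := by
  rintro (_ | n) f f' h
  · simp only [coeff_zero_X_mul]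
  · simp only [coeff_succ_X_mul]
    exact coeff_psComp_congr _ fun i hi =>
      coeff_psComp_congr g fun j hj => h j (by omega)

theorem exists_unique_solution_tree_like_equation_general
    (g : PowerSeries ℝ) (hg : ∀ n, 0 ≤ PowerSeries.coeff n g) :
    (∃! f : PowerSeries ℝ, PowerSeries.constantCoeff f = 0 ∧
        f = PowerSeries.X * psComp (PowerSeries.exp ℝ) (psComp g f)) ∧
      ∀ f : PowerSeries ℝ, PowerSeries.constantCoeff f = 0 →
        f = PowerSeries.X * psComp (PowerSeries.exp ℝ) (psComp g f) →
        ∀ n, 0 ≤ PowerSeries.coeff n f := by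
  have hΦ := coeffContracting_X_mul_psComp_exp_psComp g
  refine ⟨?_, fun f _ hf => hΦ.coeff_nonneg_of_isFixedPt ?_ hf.symm⟩
  · obtain ⟨f, hf, huniq⟩ := hΦ.existsUnique_isFixedPt
    refine ⟨f, ⟨?_, hf.symm⟩, fun f' hf' => huniq f' hf'.2.symm⟩
    rw [← hf.eq, ← coeff_zero_eq_constantCoeff_apply, coeff_zero_X_mul]
  · intro f hf n
    rcases n with _ | n
    · rw [coeff_zero_X_mul]
    · rw [coeff_succ_X_mul]
      exact coeff_psComp_nonneg (fun i => by simp [coeff_exp]) (coeff_psComp_nonneg hg hf) n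

/-- For a formal power series `g` with nonnegative coefficients and `g(0) = 0`,
there is a unique formal power series `f` with `f(0) = 0` satisfying
`f(z) = z·exp(g(f(z)))`, and `f` has nonnegative coefficients. -/
theorem exists_unique_solution_tree_like_equation
    (g : PowerSeries ℝ) (hg : ∀ n, 0 ≤ PowerSeries.coeff n g)
    (hg0 : PowerSeries.constantCoeff g = 0) :
    (∃! f : PowerSeries ℝ, PowerSeries.constantCoeff f = 0 ∧
        f = PowerSeries.X * psComp (PowerSeries.exp ℝ) (psComp g f)) ∧
      ∀ f : PowerSeries ℝ, PowerSeries.constantCoeff f = 0 →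
        f = PowerSeries.X * psComp (PowerSeries.exp ℝ) (psComp g f) →
        ∀ n, 0 ≤ PowerSeries.coeff n f :=
  exists_unique_solution_tree_like_equation_general g hg
end

section
/- Let g(y) be a power series with nonnegative coefficients and positive radius of convergence η such that g'(y) → ∞ as y → η⁻. Let f(z) be the unique power series solution of f(z) = z·exp(g(f(z))) with f(0)=0, let ρ be the radius of convergence of f, and suppose f extends continuously to [0,ρ] with τ := f(ρ) < ∞. Then τ < η. -/
/-!
If `τ ≥ η`, the increasing continuous map `f` takes every value `v ∈ (0, η)` at some
`z ∈ (0, ρ)`, and the functional equation gives back `z = ψ(v) := v e^{-g(v)}`; so `ψ` would be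
increasing on `(0, η)`. But `g'(a) → ∞` makes `a g'(a) > 1` near `η`, and then, `g` lying above
its tangent line at `a`, `log ψ(b) - log ψ(a) ≤ (b - a) (1/a - g'(a)) < 0` for `a < b < η`.
-/

open Filter Set Topology ENNReal

noncomputable def seriesRadius (c : ℕ → ℝ) : ℝ≥0∞ :=
  ⨆ (r : NNReal) (_ : Summable fun n => |c n| * (r : ℝ) ^ n), (r : ℝ≥0∞)

namespace seriesRadius

variable {c : ℕ → ℝ} {R : ℝ}

lemma summable_abs_mul_pow (h : ENNReal.ofReal R ≤ seriesRadius c) {r : ℝ} (hr : 0 ≤ r)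
    (hrR : r < R) : Summable fun n => |c n| * r ^ n := by
  have hlt : ENNReal.ofReal r < seriesRadius c :=
    (ENNReal.ofReal_lt_ofReal_iff (hr.trans_lt hrR)).2 hrR |>.trans_le h
  obtain ⟨r', hr'⟩ := lt_iSup_iff.1 hlt
  by_cases hs : Summable fun n => |c n| * (r' : ℝ) ^ n
  · rw [iSup_pos hs, ← ENNReal.ofReal_coe_nnreal, ENNReal.ofReal_lt_ofReal_iff'] at hr'
    refine hs.of_nonneg_of_le (fun n => by positivity) fun n => ?_
    exact mul_le_mul_of_nonneg_left (pow_le_pow_left₀ hr hr'.1.le n) (abs_nonneg _)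
  · simp [hs] at hr'

lemma summable_mul_pow (h : ENNReal.ofReal R ≤ seriesRadius c) {x : ℝ} (hx : |x| < R) :
    Summable fun n => c n * x ^ n :=
  Summable.of_norm <| by
    simpa only [norm_mul, norm_pow, Real.norm_eq_abs] using
      summable_abs_mul_pow h (abs_nonneg x) hx

lemma continuousOn_tsum_mul_pow (h : ENNReal.ofReal R ≤ seriesRadius c) :
    ContinuousOn (fun x => ∑' n, c n * x ^ n) (Ioo (-R) R) := by
  intro x hx
  obtain ⟨r, hxr, hrR⟩ := exists_between (abs_lt.2 hx)
  have hcont : ContinuousOn (fun x => ∑' n, c n * x ^ n) (Icc (-r) r) := by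
    refine continuousOn_tsum (fun n => (continuous_const.mul (continuous_pow n)).continuousOn)
      (summable_abs_mul_pow h ((abs_nonneg x).trans hxr.le) hrR) fun n y hy => ?_
    rw [norm_mul, norm_pow, Real.norm_eq_abs, Real.norm_eq_abs]
    exact mul_le_mul_of_nonneg_left
      (pow_le_pow_left₀ (abs_nonneg y) (abs_le.2 hy) n) (abs_nonneg _)
  exact (hcont.continuousAt (Icc_mem_nhds (abs_lt.1 hxr).1 (abs_lt.1 hxr).2)).continuousWithinAt

variable (hc : ∀ n, 0 ≤ c n) (h : ENNReal.ofReal R ≤ seriesRadius c)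
include hc h

lemma monotoneOn_tsum_mul_pow : MonotoneOn (fun x => ∑' n, c n * x ^ n) (Ico 0 R) := by
  intro x hx y hy hxy
  refine Summable.tsum_le_tsum (fun n => ?_) (summable_mul_pow h ?_) (summable_mul_pow h ?_)
  · exact mul_le_mul_of_nonneg_left (pow_le_pow_left₀ hx.1 hxy n) (hc n)
  · rw [abs_of_nonneg hx.1]; exact hx.2
  · rw [abs_of_nonneg hy.1]; exact hy.2

lemma mul_tsum_deriv_le_tsum_sub {a b : ℝ} (ha : 0 ≤ a) (hab : a ≤ b) (hbR : b < R) :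
    (b - a) * ∑' n : ℕ, ((n : ℝ) + 1) * c (n + 1) * a ^ n
      ≤ ∑' n, c n * b ^ n - ∑' n, c n * a ^ n := by
  set D : ℕ → ℝ := fun n => c n * (b ^ n - a ^ n)
  have hsum_a := summable_mul_pow h (x := a) (by rw [abs_of_nonneg ha]; linarith)
  have hsum_b := summable_mul_pow h (x := b) (by rw [abs_of_nonneg (ha.trans hab)]; linarith)
  have hD : Summable D := (hsum_b.sub hsum_a).congr fun n => by simp only [D]; ring
  have hD_shift : Summable fun n => D (n + 1) := hD.comp_injective (add_left_injective 1)
  have hterm : ∀ n : ℕ, (b - a) * (((n : ℝ) + 1) * c (n + 1) * a ^ n) ≤ D (n + 1) := fun n => by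
    have bernoulli := pow_add_mul_le_add_pow ha (by linarith : 0 ≤ 2 * a + (b - a)) (n + 1)
    simp only [add_sub_cancel, Nat.add_sub_cancel, Nat.cast_succ] at bernoulli
    have := mul_le_mul_of_nonneg_left bernoulli (hc (n + 1))
    simp only [D]
    linarith
  have hterm_nonneg : ∀ n : ℕ, 0 ≤ (b - a) * (((n : ℝ) + 1) * c (n + 1) * a ^ n) := fun n =>
    mul_nonneg (sub_nonneg.2 hab) (mul_nonneg (mul_nonneg (by positivity) (hc _)) (pow_nonneg ha n))
  calc (b - a) * ∑' n : ℕ, ((n : ℝ) + 1) * c (n + 1) * a ^ n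
      = ∑' n : ℕ, (b - a) * (((n : ℝ) + 1) * c (n + 1) * a ^ n) := tsum_mul_left.symm
    _ ≤ ∑' n, D (n + 1) :=
      Summable.tsum_le_tsum hterm (hD_shift.of_nonneg_of_le hterm_nonneg hterm) hD_shift
    _ = ∑' n, D n := by rw [hD.tsum_eq_zero_add]; simp [D]
    _ = ∑' n, c n * b ^ n - ∑' n, c n * a ^ n := by
      rw [← hsum_b.tsum_sub hsum_a]; simp only [D, mul_sub]

lemma mul_exp_neg_tsum_lt {a b : ℝ} (ha : 0 < a) (hab : a < b) (hbR : b < R)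
    (hderiv : a⁻¹ < ∑' n : ℕ, ((n : ℝ) + 1) * c (n + 1) * a ^ n) :
    b * Real.exp (-∑' n, c n * b ^ n) < a * Real.exp (-∑' n, c n * a ^ n) := by
  have hb : 0 < b := ha.trans hab
  have hlog : Real.log b - Real.log a ≤ (b - a) * a⁻¹ := by
    rw [← Real.log_div hb.ne' ha.ne', ← div_eq_mul_inv, sub_div, div_self ha.ne']
    exact Real.log_le_sub_one_of_pos (div_pos hb ha)
  have htangent := mul_tsum_deriv_le_tsum_sub hc h ha.le hab.le hbR
  have hsteep := mul_lt_mul_of_pos_left hderiv (sub_pos.2 hab)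
  have hexp : ∀ v > 0, ∀ t, v * Real.exp (-t) = Real.exp (Real.log v - t) := fun v hv t => by
    rw [sub_eq_add_neg, Real.exp_add, Real.exp_log hv]
  rw [hexp b hb, hexp a ha, Real.exp_lt_exp]
  linarith

end seriesRadius

lemma exists_mem_Ioo_eq_of_tendsto_nhdsLT {F : ℝ → ℝ} {ρ τ v : ℝ} (hρ : 0 < ρ)
    (hcont : ContinuousOn F (Ico 0 ρ)) (hF0 : F 0 = 0) (hτ : Tendsto F (𝓝[<] ρ) (𝓝 τ))
    (hv : 0 < v) (hvτ : v < τ) : ∃ z ∈ Ioo 0 ρ, F z = v := by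
  obtain ⟨w, hvw, hw⟩ :=
    ((hτ.eventually (eventually_gt_nhds hvτ)).and (Ioo_mem_nhdsLT hρ)).exists
  obtain ⟨z, hz, hFz⟩ := intermediate_value_Icc hw.1.le
    (hcont.mono (Icc_subset_Ico_right hw.2)) ⟨by rw [hF0]; exact hv.le, hvw.le⟩
  refine ⟨z, ⟨hz.1.lt_of_ne ?_, hz.2.trans_lt hw.2⟩, hFz⟩
  rintro rfl
  exact hv.ne' (hFz ▸ hF0)

theorem subcritical_criterion_general
    (gc fc : ℕ → ℝ)
    (hgc : ∀ n, 0 ≤ gc n)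
    (hfc : ∀ n, 0 ≤ fc n) (hfc0 : fc 0 = 0)
    (η ρ τ : ℝ) (hη : 0 < η) (hρ : 0 < ρ)
    (hradg : seriesRadius gc = ENNReal.ofReal η)
    (hradf : seriesRadius fc = ENNReal.ofReal ρ)
    (G : ℝ → ℝ) (hG : ∀ y, G y = ∑' n, gc n * y ^ n)
    (F : ℝ → ℝ) (hF : ∀ z, F z = ∑' n, fc n * z ^ n)
    -- g'(y) → ∞ as y → η⁻ (the derivative series of g):
    (hg'div : Tendsto (fun y => ∑' (n : ℕ), ((n : ℝ) + 1) * gc (n + 1) * y ^ n)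
      (𝓝[<] η) atTop)
    -- the functional equation f(z) = z exp(g(f(z))) on (0,ρ):
    (heq : ∀ z ∈ Ioo 0 ρ, F z = z * Real.exp (G (F z)))
    -- f extends continuously to ρ with value τ:
    (hτ : Tendsto F (𝓝[<] ρ) (𝓝 τ)) :
    τ < η := by
  by_contra! hητ
  obtain ⟨v₁, hg'v₁, hv₁⟩ :=
    ((hg'div.eventually_gt_atTop (2 / η)).and (Ioo_mem_nhdsLT (half_lt_self hη))).exists
  obtain ⟨v₂, hv₁₂, hv₂η⟩ := exists_between hv₁.2
  have hv₁pos : 0 < v₁ := (half_pos hη).trans hv₁.1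
  have hψ : v₂ * Real.exp (-G v₂) < v₁ * Real.exp (-G v₁) := by
    refine hG v₂ ▸ hG v₁ ▸ seriesRadius.mul_exp_neg_tsum_lt hgc hradg.ge hv₁pos hv₁₂ hv₂η ?_
    calc v₁⁻¹ < (η / 2)⁻¹ := inv_strictAnti₀ (half_pos hη) hv₁.1
      _ = 2 / η := inv_div _ _
      _ < _ := hg'v₁
  have hFcont : ContinuousOn F (Ico 0 ρ) :=
    ((seriesRadius.continuousOn_tsum_mul_pow hradf.ge).congr fun z _ => hF z).mono
      fun z hz => ⟨by linarith [hz.1], hz.2⟩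
  have hF0 : F 0 = 0 := by
    rw [hF, tsum_eq_single 0 fun n hn => by simp [zero_pow hn]]
    simp [hfc0]
  have hFinv : ∀ z ∈ Ioo 0 ρ, z = F z * Real.exp (-G (F z)) := fun z hz =>
    calc z = z * Real.exp (G (F z)) * Real.exp (-G (F z)) := by
          rw [mul_assoc, ← Real.exp_add, add_neg_cancel, Real.exp_zero, mul_one]
      _ = F z * Real.exp (-G (F z)) := by rw [← heq z hz]
  obtain ⟨z₁, hz₁, hFz₁⟩ :=
    exists_mem_Ioo_eq_of_tendsto_nhdsLT hρ hFcont hF0 hτ hv₁pos (hv₁.2.trans_le hητ)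
  obtain ⟨z₂, hz₂, hFz₂⟩ :=
    exists_mem_Ioo_eq_of_tendsto_nhdsLT hρ hFcont hF0 hτ (hv₁pos.trans hv₁₂) (hv₂η.trans_le hητ)
  have hFmono : MonotoneOn F (Ico 0 ρ) :=
    (seriesRadius.monotoneOn_tsum_mul_pow hfc hradf.ge).congr fun z _ => (hF z).symm
  have hz₁₂ : z₁ < z₂ := hFmono.reflect_lt (Ioo_subset_Ico_self hz₁) (Ioo_subset_Ico_self hz₂)
    (hFz₁ ▸ hFz₂ ▸ hv₁₂)
  have hz₂₁ : z₂ < z₁ := by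
    rw [hFinv z₁ hz₁, hFinv z₂ hz₂, hFz₁, hFz₂]
    exact hψ
  exact hz₁₂.asymm hz₂₁

/-- Subcriticality criterion.  Let `g(y) = Σ gc_n yⁿ` have nonnegative
coefficients, `g(0)=0`, radius of convergence `η ∈ (0,∞)`, and `g'(y) → ∞` as `y → η⁻`.
Let `f(z) = Σ fc_n zⁿ` (nonnegative coefficients, `f(0)=0`) solve `f(z) = z·exp(g(f(z)))`
on `(0,ρ)`, where `ρ ∈ (0,∞)` is the radius of convergence of `f`, and suppose
`f(z) → τ < ∞` as `z → ρ⁻`.  Then `τ < η`. -/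
theorem subcritical_criterion
    (gc fc : ℕ → ℝ)
    (hgc : ∀ n, 0 ≤ gc n) (hgc0 : gc 0 = 0)
    (hfc : ∀ n, 0 ≤ fc n) (hfc0 : fc 0 = 0)
    (η ρ τ : ℝ) (hη : 0 < η) (hρ : 0 < ρ)
    (hradg : seriesRadius gc = ENNReal.ofReal η)
    (hradf : seriesRadius fc = ENNReal.ofReal ρ)
    (G : ℝ → ℝ) (hG : ∀ y, G y = ∑' n, gc n * y ^ n)
    (F : ℝ → ℝ) (hF : ∀ z, F z = ∑' n, fc n * z ^ n)
    -- g'(y) → ∞ as y → η⁻ (the derivative series of g):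
    (hg'div : Tendsto (fun y => ∑' (n : ℕ), ((n : ℝ) + 1) * gc (n + 1) * y ^ n)
      (𝓝[<] η) atTop)
    -- the functional equation f(z) = z exp(g(f(z))) on (0,ρ):
    (heq : ∀ z ∈ Ioo 0 ρ, F z = z * Real.exp (G (F z)))
    -- f extends continuously to ρ with value τ:
    (hτ : Tendsto F (𝓝[<] ρ) (𝓝 τ)) :
    τ < η :=
  subcritical_criterion_general gc fc hgc hfc hfc0 η ρ τ hη hρ hradg hradf G hG F hF hg'div heq hτ
end

section
/- Let g(y) have nonnegative coefficients with g(0)=0 and let f satisfy f(z) = z·exp(g(f(z))) with f(0)=0, f having nonnegative coefficients and radius of convergence ρ > 0. Then for all z ∈ (0,ρ), f'(z) = f(z)/z + g'(f(z))·f'(z)·f(z); in particular g'(f(z)) ≤ 1/f(z) for z ∈ (0,ρ) where f(z) > 0. -/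
/-!
Differentiating `f(z) = z exp(g(f(z)))` gives `f' = e + z e g'(f) f'` with
`e = exp(g(f(z))) = f(z)/z`, which is the identity. It rewrites as `f' (1 - g'(f) f) = f/z > 0`,
so `f' > 0` forces `g'(f) f < 1`. Termwise differentiation of `g` at `f(z)` is legitimate
because `f` increases on `(0, ρ)`: `f(z) < f(z')` for some `z < z' < ρ`, where the series of `g`
converges.
-/

open Filter Set Topology ENNReal

lemma summable_mul_pow_of_lt_seriesRadius {c : ℕ → ℝ} {r : ℝ} (hr : 0 ≤ r)
    (h : ENNReal.ofReal r < seriesRadius c) : Summable fun n => c n * r ^ n := by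
  obtain ⟨s, hs, hrs⟩ : ∃ s : NNReal, (Summable fun n => |c n| * (s : ℝ) ^ n) ∧
      ENNReal.ofReal r < s := by
    simpa only [seriesRadius, lt_iSup_iff, exists_prop] using h
  rw [ENNReal.ofReal_lt_coe_iff hr] at hrs
  refine .of_norm (hs.of_nonneg_of_le (fun n => norm_nonneg _) fun n => ?_)
  rw [Real.norm_eq_abs, abs_mul, abs_pow, abs_of_nonneg hr]
  gcongr

lemma summable_succ_mul_abs_mul_pow_of_bound {c : ℕ → ℝ} {r s M : ℝ}
    (hM : ∀ n, |c n| * r ^ n ≤ M) (hs : 0 ≤ s) (hsr : s < r) :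
    Summable fun n : ℕ => ((n : ℝ) + 1) * |c (n + 1)| * s ^ n := by
  have hr : 0 < r := hs.trans_lt hsr
  set q := s / r
  have hq : ‖q‖ < 1 := by
    rw [Real.norm_of_nonneg (by positivity)]; exact (div_lt_one hr).2 hsr
  have hgeom : Summable fun n : ℕ => ((n : ℝ) + 1) * q ^ n := by
    simpa [add_mul] using (summable_pow_mul_geometric_of_norm_lt_one 1 hq).add
      (summable_geometric_of_norm_lt_one hq)
  refine (hgeom.mul_right (M / r)).of_nonneg_of_le (fun n => by positivity) fun n => ?_
  have hterm : ((n : ℝ) + 1) * |c (n + 1)| * s ^ n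
      = ((n : ℝ) + 1) * q ^ n * (|c (n + 1)| * r ^ (n + 1) / r) := by
    simp only [q, div_pow]; field_simp; ring
  rw [hterm]
  gcongr
  exact hM (n + 1)

lemma hasDerivAt_tsum_mul_pow {c : ℕ → ℝ} {r x : ℝ} (hc : Summable fun n => c n * r ^ n)
    (hx : |x| < r) :
    HasDerivAt (fun y => ∑' n, c n * y ^ n)
      (∑' n : ℕ, ((n : ℝ) + 1) * c (n + 1) * x ^ n) x := by
  have hr : 0 < r := (abs_nonneg x).trans_lt hx
  obtain ⟨M, hM⟩ : ∃ M, ∀ n, |c n| * r ^ n ≤ M := by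
    obtain ⟨M, hM⟩ := hc.tendsto_atTop_zero.abs.bddAbove_range
    refine ⟨M, fun n => ?_⟩
    simpa [abs_mul, abs_of_pos hr] using hM ⟨n, rfl⟩
  obtain ⟨s, hxs, hsr⟩ := exists_between hx
  have hs : 0 < s := (abs_nonneg x).trans_lt hxs
  rw [← Real.norm_eq_abs, ← mem_ball_zero_iff] at hxs
  -- Differentiating `c (n + 1) * y ^ (n + 1)` instead of `c n * y ^ n` avoids the exponent `n - 1`.
  have hderiv : ∀ (n : ℕ) (y : ℝ), y ∈ Metric.ball (0 : ℝ) s →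
      HasDerivAt (fun y => c (n + 1) * y ^ (n + 1)) (((n : ℝ) + 1) * c (n + 1) * y ^ n) y := by
    intro n y _
    refine ((hasDerivAt_pow (n + 1) y).const_mul (c (n + 1))).congr_deriv ?_
    rw [Nat.add_sub_cancel]; push_cast; ring
  have hbound : ∀ (n : ℕ) (y : ℝ), y ∈ Metric.ball (0 : ℝ) s →
      ‖((n : ℝ) + 1) * c (n + 1) * y ^ n‖ ≤ ((n : ℝ) + 1) * |c (n + 1)| * s ^ n := by
    intro n y hy
    rw [mem_ball_zero_iff, Real.norm_eq_abs] at hy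
    rw [Real.norm_eq_abs, abs_mul, abs_mul, abs_pow,
      abs_of_nonneg (by positivity : (0 : ℝ) ≤ n + 1)]
    gcongr
  have hu := summable_succ_mul_abs_mul_pow_of_bound hM hs.le hsr
  have hzero : Summable fun n => c (n + 1) * (0 : ℝ) ^ (n + 1) := by simp
  have hball := (convex_ball (0 : ℝ) s).isPreconnected
  have hshift := hasDerivAt_tsum_of_isPreconnected hu Metric.isOpen_ball hball hderiv hbound
    (Metric.mem_ball_self hs) hzero hxs
  refine (hshift.const_add (c 0)).congr_of_eventuallyEq ?_
  filter_upwards [Metric.isOpen_ball.mem_nhds hxs] with y hy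
  have hsy := summable_of_summable_hasDerivAt_of_isPreconnected hu Metric.isOpen_ball hball hderiv
    hbound (Metric.mem_ball_self hs) hzero hy
  rw [tsum_eq_zero_add' (f := fun n => c n * y ^ n) hsy, pow_zero, mul_one]

lemma eq_div_add_mul_of_eventuallyEq_mul_exp_comp {F G : ℝ → ℝ} {F' G' z : ℝ}
    (hF : HasDerivAt F F' z) (hG : HasDerivAt G G' (F z))
    (heq : F =ᶠ[𝓝 z] fun w => w * Real.exp (G (F w))) (hz : z ≠ 0) :
    F' = F z / z + G' * F' * F z := by
  have hrhs := (hasDerivAt_id z).mul (hG.comp z hF).exp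
  have hF' := hF.unique (hrhs.congr_of_eventuallyEq heq)
  simp only [Function.comp, id] at hF'
  have hFz : F z = z * Real.exp (G (F z)) := heq.eq_of_nhds
  have hexp : Real.exp (G (F z)) = F z / z := eq_div_of_mul_eq hz (by linear_combination -hFz)
  rw [← hexp]
  linear_combination hF' - G' * F' * hFz

theorem derivative_identity_of_tree_like_equation_general
    (gc fc : ℕ → ℝ)
    (ρ : ℝ)
    (hradf : seriesRadius fc = ENNReal.ofReal ρ)
    (G : ℝ → ℝ) (hG : ∀ y, G y = ∑' (n : ℕ), gc n * y ^ n)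
    (G' : ℝ → ℝ) (hG' : ∀ y, G' y = ∑' (n : ℕ), ((n : ℝ) + 1) * gc (n + 1) * y ^ n)
    (F : ℝ → ℝ) (hF : ∀ z, F z = ∑' (n : ℕ), fc n * z ^ n)
    (F' : ℝ → ℝ) (hF' : ∀ z, F' z = ∑' (n : ℕ), ((n : ℝ) + 1) * fc (n + 1) * z ^ n)
    -- g is analytic at the relevant values f(z), z ∈ (0,ρ):
    (hGconv : ∀ z ∈ Ioo 0 ρ, Summable fun n : ℕ => gc n * F z ^ n)
    -- f' > 0 on (0,ρ):
    (hF'pos : ∀ z ∈ Ioo 0 ρ, 0 < F' z)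
    -- the functional equation f(z) = z exp(g(f(z))) on (0,ρ):
    (heq : ∀ z ∈ Ioo 0 ρ, F z = z * Real.exp (G (F z))) :
    ∀ z ∈ Ioo 0 ρ,
      (F' z = F z / z + G' (F z) * F' z * F z) ∧
        (0 < F z → G' (F z) ≤ 1 / F z) := by
  have hFderiv : ∀ z ∈ Ioo 0 ρ, HasDerivAt F (F' z) z := by
    rintro z ⟨hz0, hzρ⟩
    obtain ⟨z', hzz', hz'ρ⟩ := exists_between hzρ
    have hz' : ENNReal.ofReal z' < seriesRadius fc := by
      rw [hradf, ENNReal.ofReal_lt_ofReal_iff']; exact ⟨hz'ρ, hz0.trans hzρ⟩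
    rw [funext hF, hF']
    exact hasDerivAt_tsum_mul_pow (summable_mul_pow_of_lt_seriesRadius (hz0.trans hzz').le hz')
      (by rwa [abs_of_pos hz0])
  have hFmono : StrictMonoOn F (Ioo 0 ρ) := by
    refine strictMonoOn_of_hasDerivWithinAt_pos (convex_Ioo 0 ρ)
      (fun z hz => (hFderiv z hz).continuousAt.continuousWithinAt) (f' := F') ?_ ?_ <;>
      rw [interior_Ioo]
    exacts [fun z hz => (hFderiv z hz).hasDerivWithinAt, hF'pos]
  intro z hz
  have hFpos : 0 < F z := heq z hz ▸ mul_pos hz.1 (Real.exp_pos _)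
  obtain ⟨z', hzz', hz'ρ⟩ := exists_between hz.2
  have hz' : z' ∈ Ioo 0 ρ := ⟨hz.1.trans hzz', hz'ρ⟩
  have hGderiv : HasDerivAt G (G' (F z)) (F z) := by
    rw [funext hG, hG']
    exact hasDerivAt_tsum_mul_pow (hGconv z' hz')
      (by rw [abs_of_pos hFpos]; exact hFmono hz hz' hzz')
  have hid := eq_div_add_mul_of_eventuallyEq_mul_exp_comp (hFderiv z hz) hGderiv
    (eventually_of_mem (Ioo_mem_nhds hz.1 hz.2) heq) hz.1.ne'
  refine ⟨hid, fun _ => ?_⟩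
  have hfactor : F' z * (1 - G' (F z) * F z) = F z / z := by linear_combination hid
  have hpos : 0 < 1 - G' (F z) * F z :=
    pos_of_mul_pos_right (hfactor ▸ div_pos hFpos hz.1) (hF'pos z hz).le
  rw [le_div_iff₀ hFpos]
  linarith

/-- If `f(z) = z·exp(g(f(z)))` with `f, g` power series with nonnegative
coefficients, `f(0) = g(0) = 0` and `ρ > 0` the radius of convergence of `f`, then for all
`z ∈ (0,ρ)` we have `f'(z) = f(z)/z + g'(f(z))·f'(z)·f(z)`; in particular
`g'(f(z)) ≤ 1/f(z)` wherever `f(z) > 0` on `(0,ρ)`. -/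
theorem derivative_identity_of_tree_like_equation
    (gc fc : ℕ → ℝ)
    (hgc : ∀ n, 0 ≤ gc n) (hgc0 : gc 0 = 0)
    (hfc : ∀ n, 0 ≤ fc n) (hfc0 : fc 0 = 0)
    (ρ : ℝ) (hρ : 0 < ρ)
    (hradf : seriesRadius fc = ENNReal.ofReal ρ)
    (G : ℝ → ℝ) (hG : ∀ y, G y = ∑' (n : ℕ), gc n * y ^ n)
    (G' : ℝ → ℝ) (hG' : ∀ y, G' y = ∑' (n : ℕ), ((n : ℝ) + 1) * gc (n + 1) * y ^ n)
    (F : ℝ → ℝ) (hF : ∀ z, F z = ∑' (n : ℕ), fc n * z ^ n)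
    (F' : ℝ → ℝ) (hF' : ∀ z, F' z = ∑' (n : ℕ), ((n : ℝ) + 1) * fc (n + 1) * z ^ n)
    -- g is analytic at the relevant values f(z), z ∈ (0,ρ):
    (hGconv : ∀ z ∈ Ioo 0 ρ, Summable fun n : ℕ => gc n * F z ^ n)
    (hG'conv : ∀ z ∈ Ioo 0 ρ, Summable fun n : ℕ => ((n : ℝ) + 1) * gc (n + 1) * F z ^ n)
    -- f' > 0 on (0,ρ):
    (hF'pos : ∀ z ∈ Ioo 0 ρ, 0 < F' z)
    -- the functional equation f(z) = z exp(g(f(z))) on (0,ρ):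
    (heq : ∀ z ∈ Ioo 0 ρ, F z = z * Real.exp (G (F z))) :
    ∀ z ∈ Ioo 0 ρ,
      (F' z = F z / z + G' (F z) * F' z * F z) ∧
        (0 < F z → G' (F z) ≤ 1 / F z) :=
  derivative_identity_of_tree_like_equation_general gc fc ρ hradf G hG G' hG' F hF F' hF' hGconv
    hF'pos heq
end

section
/- The generating function T(y) of rooted plane trees with no node of degree 2, satisfying T(y) = (T(y)+y)²/(1−y−T(y)), equals T(y) = (1 − 3y − √(y² − 6y + 1))/4, and has a square-root singularity at its radius of convergence ρ_T = 3 − 2√2. -/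
open PowerSeries Set ENNReal

/-!
For `y ≥ 0` the rescaled series `S = T(yX)` satisfies the same equation with `X` replaced by
`C y * X`. Summing coefficients is a ring homomorphism on power series with absolutely summable
coefficients, so whenever the coefficients of `S` are summable their sum `g` solves
`g (1 - y - g) = (g + y)²`, i.e. `(4g + 3y - 1)² = y² - 6y + 1`. For `3 - 2√2 < y < 3 + 2√2`
the right-hand side is negative, so the series diverges there. For `0 ≤ y < 3 - 2√2`, reading the
equation coefficientwise shows inductively that the partial sums stay below the smaller root
`t = (1 - 3y - √(y² - 6y + 1))/4`; hence the series converges, and its sum is a root `≤ t`, i.e. `t`.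
-/

open scoped NNReal

namespace PowerSeries

section AbsSummable

variable (R : Type*) [NormedRing R]

def absSummableSubring : Subring R⟦X⟧ where
  carrier := {f | Summable fun n => ‖coeff n f‖}
  mul_mem' {f g} hf hg := by
    show Summable fun n => ‖coeff n (f * g)‖
    simpa only [coeff_mul] using summable_norm_sum_mul_antidiagonal_of_summable_norm hf hg
  one_mem' := summable_of_ne_finset_zero (s := {0}) fun n hn => by
    simp [coeff_one, Finset.mem_singleton.not.mp hn]
  add_mem' {f g} hf hg := (hf.add hg).of_nonneg_of_le (fun _ => norm_nonneg _) fun n => by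
    simpa only [map_add] using norm_add_le _ _
  zero_mem' := by simp [summable_zero]
  neg_mem' {f} hf := by simpa using hf

variable {R}

theorem C_mul_X_mem_absSummableSubring (a : R) : C a * X ∈ absSummableSubring R :=
  summable_of_ne_finset_zero (s := {1}) fun n hn => by
    simp [coeff_C_mul, coeff_X, Finset.mem_singleton.not.mp hn]

variable (R) [CompleteSpace R]

noncomputable def sumCoeffs : absSummableSubring R →+* R where
  toFun f := ∑' n, coeff n (f : R⟦X⟧)
  map_one' := by simp [coeff_one]
  map_mul' f g := by
    simp only [Subring.coe_mul, coeff_mul]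
    exact (tsum_mul_tsum_eq_tsum_sum_antidiagonal_of_summable_norm f.2 g.2).symm
  map_zero' := by simp
  map_add' f g := by
    simp only [Subring.coe_add, map_add]
    exact f.2.of_norm.tsum_add g.2.of_norm

variable {R}

theorem sumCoeffs_apply (f : absSummableSubring R) :
    sumCoeffs R f = ∑' n, coeff n (f : R⟦X⟧) :=
  rfl

theorem sumCoeffs_C_mul_X (a : R) :
    sumCoeffs R ⟨C a * X, C_mul_X_mem_absSummableSubring a⟩ = a := by
  simp [sumCoeffs_apply, coeff_C_mul, coeff_X]

theorem tsum_coeff_tree_eq {S : R⟦X⟧} {y : R} (hS : Summable fun n => ‖coeff n S‖)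
    (heq : S * (1 - C y * X - S) = (S + C y * X) ^ 2) :
    (∑' n, coeff n S) * (1 - y - ∑' n, coeff n S) = (∑' n, coeff n S + y) ^ 2 := by
  let s : absSummableSubring R := ⟨S, hS⟩
  let x : absSummableSubring R := ⟨C y * X, C_mul_X_mem_absSummableSubring y⟩
  have hsx : s * (1 - x - s) = (s + x) ^ 2 := Subtype.ext (by simpa using heq)
  have h := congrArg (sumCoeffs R) hsx
  rwa [map_mul, map_sub, map_sub, map_one, map_pow, map_add, sumCoeffs_C_mul_X] at h

end AbsSummable

theorem rescale_tree_eq {R : Type*} [CommRing R] {T : R⟦X⟧}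
    (halg : T * (1 - X - T) = (T + X) ^ 2) (a : R) :
    rescale a T * (1 - C a * X - rescale a T) = (rescale a T + C a * X) ^ 2 := by
  simpa using congrArg (rescale a) halg

open Finset

theorem sum_range_succ_coeff_mul_le {R : Type*} [Semiring R] [PartialOrder R]
    [IsOrderedRing R] {f g : R⟦X⟧} (hf : ∀ n, 0 ≤ coeff n f) (hg : ∀ n, 0 ≤ coeff n g)
    (hf0 : constantCoeff f = 0) (hg0 : constantCoeff g = 0) (N : ℕ) :
    ∑ n ∈ Finset.range (N + 1), coeff n (f * g) ≤
      (∑ n ∈ Finset.range N, coeff n f) * ∑ n ∈ Finset.range N, coeff n g := by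
  have hdisj : (↑(Finset.range (N + 1)) : Set ℕ).PairwiseDisjoint antidiagonal :=
    fun m _ n _ hmn => disjoint_left.2 fun p hm hn =>
      hmn ((mem_antidiagonal.1 hm).symm.trans (mem_antidiagonal.1 hn))
  simp_rw [coeff_mul]
  -- the pairs `(i, j)` with `i + j ≤ N` and a nonzero term have `0 < i, j`, hence `i, j < N`
  rw [← sum_biUnion hdisj, sum_mul_sum, ← sum_product',
    ← sum_filter_of_ne (p := fun p => p.1 ≠ 0 ∧ p.2 ≠ 0) fun p _ h =>
      ⟨fun h1 => h (by simp [h1, hf0]), fun h2 => h (by simp [h2, hg0])⟩]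
  refine sum_le_sum_of_subset_of_nonneg (fun p hp => ?_) fun p _ _ => mul_nonneg (hf _) (hg _)
  simp only [mem_filter, Finset.mem_biUnion, Finset.mem_range, HasAntidiagonal.mem_antidiagonal,
    mem_product] at hp ⊢
  omega

theorem sum_range_coeff_C_mul_X_le {a : ℝ} (ha : 0 ≤ a) (N : ℕ) :
    ∑ n ∈ Finset.range N, coeff n (C a * X) ≤ a := by
  simp only [coeff_C_mul, coeff_X, mul_ite, mul_one, mul_zero, sum_ite_eq', Finset.mem_range]
  split_ifs <;> simp [ha]

end PowerSeries

theorem tree_eq_iff_sq_eq_discr (g y : ℝ) :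
    g * (1 - y - g) = (g + y) ^ 2 ↔ (4 * g + 3 * y - 1) ^ 2 = y ^ 2 - 6 * y + 1 :=
  ⟨fun h => by linear_combination (-8) * h, fun h => by linear_combination (-1 / 8) * h⟩

theorem sq_sub_six_mul_add_one_eq_mul (y : ℝ) :
    y ^ 2 - 6 * y + 1 = (3 - 2 * √2 - y) * (3 + 2 * √2 - y) := by
  linear_combination 4 * Real.sq_sqrt zero_le_two

theorem three_sub_two_sqrt_two_lt_one_third : 3 - 2 * √2 < 1 / 3 := by
  nlinarith [Real.sq_sqrt zero_le_two, Real.sqrt_nonneg 2]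

namespace PowerSeries

open Finset

variable {S : ℝ⟦X⟧} {y : ℝ}

theorem sum_range_coeff_le_of_tree_eq (hS0 : constantCoeff S = 0) (hS : ∀ n, 0 ≤ coeff n S)
    (hy : 0 ≤ y) (heq : S * (1 - C y * X - S) = (S + C y * X) ^ 2) {t : ℝ} (ht : 0 ≤ t)
    (ht_eq : t * (1 - y - t) = (t + y) ^ 2) (N : ℕ) : ∑ n ∈ Finset.range N, coeff n S ≤ t := by
  set Y : ℝ⟦X⟧ := C y * X
  have hY : ∀ n, 0 ≤ coeff n Y := fun n => by
    simp only [Y, coeff_C_mul, coeff_X]; split_ifs <;> simp [hy]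
  have hY0 : constantCoeff Y = 0 := by simp [Y]
  have hrec : S = 2 • (S * S) + 3 • (Y * S) + Y * Y := by linear_combination heq
  induction N with
  | zero => simpa using ht
  | succ N ih =>
    set s := ∑ n ∈ Finset.range N, coeff n S
    have hs : 0 ≤ s := sum_nonneg fun n _ => hS n
    have hYs := sum_range_coeff_C_mul_X_le hy N
    have hYs0 : 0 ≤ ∑ n ∈ Finset.range N, coeff n Y := sum_nonneg fun n _ => hY n
    have hSS := sum_range_succ_coeff_mul_le hS hS hS0 hS0 N
    have hYS := (sum_range_succ_coeff_mul_le hY hS hY0 hS0 N).trans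
      (mul_le_mul_of_nonneg_right hYs hs)
    have hYY := (sum_range_succ_coeff_mul_le hY hY hY0 hY0 N).trans (mul_le_mul hYs hYs hYs0 hy)
    calc ∑ n ∈ Finset.range (N + 1), coeff n S
        = 2 * ∑ n ∈ Finset.range (N + 1), coeff n (S * S)
          + 3 * ∑ n ∈ Finset.range (N + 1), coeff n (Y * S)
          + ∑ n ∈ Finset.range (N + 1), coeff n (Y * Y) := by
          conv_lhs => rw [hrec]
          simp only [map_add, map_nsmul, sum_add_distrib, sum_nsmul]
          simp only [nsmul_eq_mul, Nat.cast_ofNat]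
      _ ≤ 2 * (s * s) + 3 * (y * s) + y * y := by linarith
      _ ≤ 2 * (t * t) + 3 * (y * t) + y * y := by gcongr
      _ = t := by linear_combination -ht_eq

theorem hasSum_coeff_of_tree_eq (hS0 : constantCoeff S = 0) (hS : ∀ n, 0 ≤ coeff n S)
    (hy : 0 ≤ y) (hyρ : y < 3 - 2 * √2) (heq : S * (1 - C y * X - S) = (S + C y * X) ^ 2) :
    HasSum (fun n => coeff n S) ((1 - 3 * y - √(y ^ 2 - 6 * y + 1)) / 4) := by
  have hD : 0 < y ^ 2 - 6 * y + 1 := by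
    rw [sq_sub_six_mul_add_one_eq_mul]
    exact mul_pos (by linarith) (by linarith [Real.sqrt_nonneg 2])
  set D := y ^ 2 - 6 * y + 1
  set t := (1 - 3 * y - √D) / 4 with ht_def
  have ht : 0 ≤ t := by
    have : √D ≤ 1 - 3 * y := Real.sqrt_le_iff.2
      ⟨by linarith [three_sub_two_sqrt_two_lt_one_third], by nlinarith⟩
    linarith
  have ht_eq : t * (1 - y - t) = (t + y) ^ 2 := by
    rw [tree_eq_iff_sq_eq_discr]
    calc (4 * t + 3 * y - 1) ^ 2 = (-√D) ^ 2 := by ring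
      _ = D := by rw [neg_sq, Real.sq_sqrt hD.le]
  have hpartial := sum_range_coeff_le_of_tree_eq hS0 hS hy heq ht ht_eq
  have hsum : Summable fun n => coeff n S := summable_of_sum_range_le hS hpartial
  have hg_le : ∑' n, coeff n S ≤ t := Real.tsum_le_of_sum_range_le hS hpartial
  have hg_eq : |4 * ∑' n, coeff n S + 3 * y - 1| = √D := by
    rw [← Real.sqrt_sq_eq_abs, (tree_eq_iff_sq_eq_discr _ _).1 (tsum_coeff_tree_eq hsum.norm heq)]
  convert hsum.hasSum
  rw [abs_of_nonpos (by linarith [Real.sqrt_nonneg D])] at hg_eq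
  linarith

theorem not_summable_norm_coeff_of_tree_eq (hy : 3 - 2 * √2 < y) (hy' : y < 3 + 2 * √2)
    (heq : S * (1 - C y * X - S) = (S + C y * X) ^ 2) : ¬ Summable fun n => ‖coeff n S‖ :=
  fun hS => by
    have hsq := (tree_eq_iff_sq_eq_discr _ _).1 (tsum_coeff_tree_eq hS heq)
    have hD : y ^ 2 - 6 * y + 1 < 0 := by
      rw [sq_sub_six_mul_add_one_eq_mul]
      exact mul_neg_of_neg_of_pos (by linarith) (by linarith)
    nlinarith [sq_nonneg (4 * ∑' n, coeff n S + 3 * y - 1)]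

end PowerSeries

theorem seriesRadius_eq_ofReal {c : ℕ → ℝ} {ρ : ℝ}
    (h_lt : ∀ r : ℝ≥0, (r : ℝ) < ρ → Summable fun n => |c n| * (r : ℝ) ^ n)
    (h_gt : ∀ r : ℝ≥0, ρ < r → ¬ Summable fun n => |c n| * (r : ℝ) ^ n) :
    seriesRadius c = ENNReal.ofReal ρ := by
  refine le_antisymm (iSup₂_le fun r hr => ?_) (ENNReal.le_of_forall_nnreal_lt fun r hr => ?_)
  · rw [← ENNReal.ofReal_coe_nnreal]
    exact ENNReal.ofReal_le_ofReal (not_lt.1 fun h => h_gt r h hr)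
  · exact le_iSup₂ (f := fun (r : ℝ≥0) (_ : Summable fun n => |c n| * (r : ℝ) ^ n) => (r : ℝ≥0∞))
      r (h_lt r (ENNReal.coe_lt_ofReal.1 hr))

/-- The generating function `T(y)` of rooted plane trees with no node of
degree 2, i.e. the power series with `T(0)=0`, nonnegative coefficients satisfying
`T·(1 − y − T) = (T + y)²`, equals `(1 − 3y − √(y² − 6y + 1))/4` on `[0, ρ_T)` and has its
radius of convergence (a square-root singularity, where the discriminant vanishes) at
`ρ_T = 3 − 2√2`. -/
theorem dissection_tree_series_closed_form
    (T : PowerSeries ℝ)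
    (hT0 : PowerSeries.constantCoeff T = 0)
    (hTnonneg : ∀ n, 0 ≤ PowerSeries.coeff n T)
    (halg : T * (1 - PowerSeries.X - T) = (T + PowerSeries.X) ^ 2) :
    (∀ y ∈ Ico (0 : ℝ) (3 - 2 * Real.sqrt 2),
        ∑' (n : ℕ), PowerSeries.coeff n T * y ^ n =
          (1 - 3 * y - Real.sqrt (y ^ 2 - 6 * y + 1)) / 4) ∧
      seriesRadius (fun n => PowerSeries.coeff n T) =
        ENNReal.ofReal (3 - 2 * Real.sqrt 2) ∧
      (3 - 2 * Real.sqrt 2) ^ 2 - 6 * (3 - 2 * Real.sqrt 2) + 1 = 0 := by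
  have hsum : ∀ y, 0 ≤ y → y < 3 - 2 * √2 →
      HasSum (fun n => coeff n T * y ^ n) ((1 - 3 * y - √(y ^ 2 - 6 * y + 1)) / 4) :=
    fun y hy hyρ => by
      simpa only [coeff_rescale, mul_comm] using hasSum_coeff_of_tree_eq
        (by simp [← coeff_zero_eq_constantCoeff_apply, hT0])
        (fun n => by simpa only [coeff_rescale] using mul_nonneg (pow_nonneg hy n) (hTnonneg n))
        hy hyρ (rescale_tree_eq halg y)
  refine ⟨fun y hy => (hsum y hy.1 hy.2).tsum_eq, seriesRadius_eq_ofReal (fun r hr => ?_)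
    (fun r hr hsr => ?_), by rw [sq_sub_six_mul_add_one_eq_mul]; ring⟩
  · simpa only [abs_of_nonneg (hTnonneg _)] using (hsum r r.2 hr).summable
  · -- by comparison the series also converges at `min r 1 < 3 + 2√2`
    set z := min (r : ℝ) 1
    have hz0 : 0 ≤ z := le_min r.2 zero_le_one
    refine not_summable_norm_coeff_of_tree_eq
      (lt_min hr (by linarith [three_sub_two_sqrt_two_lt_one_third]))
      ((min_le_right _ _).trans_lt (by linarith [Real.sqrt_nonneg 2])) (rescale_tree_eq halg z)
      (hsr.of_nonneg_of_le (fun _ => norm_nonneg _) fun n => ?_)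
    rw [coeff_rescale, norm_mul, norm_pow, Real.norm_of_nonneg hz0, Real.norm_eq_abs, mul_comm]
    gcongr
    exact min_le_left _ _
end

section
/- Let F(y;z) be a bivariate function analytic at (y₀, z₀) with nonnegative Taylor coefficients, F(0;z) ≠ 0, F nonlinear in y, and suppose y(z) is a power series with nonnegative coefficients satisfying y = F(y;z), finite limit y₀ = y(z₀) at its radius of convergence z₀, with F_y(y₀; z₀) = 1 and F_{yy}(y₀;z₀) ≠ 0, F_z(y₀;z₀) ≠ 0. Then y(z₀) − y(z) ~ C·√(1 − z/z₀) as z → z₀⁻ along the reals, where C = √(2 z₀ F_z(y₀;z₀) / F_{yy}(y₀;z₀)). -/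
/-!
Put `h(y) = F(y;z₀) - y`. By the functional equation,
`h(Y z) = F(Y z; z₀) - F(Y z; z) = (z₀ - z) (F_z(y₀;z₀) + o(1))`, using strict differentiability
of `F` at `(y₀,z₀)` along the segment from `(Y z, z)` to `(Y z, z₀)`. Since `F(y₀;z₀) = y₀` and
`F_y(y₀;z₀) = 1`, second-order Taylor expansion gives `h(y) = (F_yy/2) (y - y₀)² + o((y - y₀)²)`.
Comparing the two, `(Y z - y₀)² / (z₀ - z) → 2 F_z / F_yy`; as `Y` has nonnegative coefficients it
increases to `y₀`, so `y₀ - Y z` is the nonnegative square root.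
-/

open Filter Set Topology ENNReal

theorem summable_abs_mul_pow_of_ofReal_lt_seriesRadius {c : ℕ → ℝ} {z : ℝ} (hz : 0 ≤ z)
    (h : ENNReal.ofReal z < seriesRadius c) : Summable fun n => |c n| * z ^ n := by
  obtain ⟨r, hr⟩ := lt_iSup_iff.mp h
  obtain ⟨hsum, hzr⟩ := lt_iSup_iff.mp hr
  have hzr' : z ≤ r := ((ENNReal.ofReal_lt_iff_lt_toReal hz coe_ne_top).mp hzr).le
  refine hsum.of_nonneg_of_le (fun n => by positivity) fun n => ?_
  gcongr

theorem monotoneOn_tsum_mul_pow {c : ℕ → ℝ} {r : ℝ} (hc : ∀ n, 0 ≤ c n)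
    (hr : ENNReal.ofReal r ≤ seriesRadius c) :
    MonotoneOn (fun z => ∑' n, c n * z ^ n) (Ico 0 r) := by
  have hsum : ∀ z ∈ Ico 0 r, Summable fun n => c n * z ^ n := fun z hz => by
    have hlt : ENNReal.ofReal z < seriesRadius c :=
      ((ENNReal.ofReal_lt_ofReal_iff (hz.1.trans_lt hz.2)).mpr hz.2).trans_le hr
    simpa only [abs_of_nonneg (hc _)] using
      summable_abs_mul_pow_of_ofReal_lt_seriesRadius hz.1 hlt
  intro z hz w hw hzw
  exact (hsum z hz).tsum_le_tsum
    (fun n => mul_le_mul_of_nonneg_left (pow_le_pow_left₀ hz.1 hzw n) (hc n)) (hsum w hw)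

theorem MonotoneOn.le_of_tendsto_nhdsLT {α β : Type*} [LinearOrder α] [TopologicalSpace α]
    [OrderTopology α] [DenselyOrdered α] [Preorder β] [TopologicalSpace β] [ClosedIciTopology β]
    {f : α → β} {a b : α} {L : β} (hf : MonotoneOn f (Ico a b))
    (h : Tendsto f (𝓝[<] b) (𝓝 L)) : ∀ x ∈ Ico a b, f x ≤ L := by
  intro x hx
  have : (𝓝[<] b).NeBot := nhdsLT_neBot_of_exists_lt ⟨x, hx.2⟩
  refine ge_of_tendsto h ?_
  filter_upwards [Ioo_mem_nhdsLT hx.2] with w hw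
  exact hf hx ⟨hx.1.trans hw.1.le, hw.2⟩ hw.1.le

theorem HasStrictFDerivAt.tendsto_slope_snd {𝕜 E : Type*} [NontriviallyNormedField 𝕜]
    [NormedAddCommGroup E] [NormedSpace 𝕜 E] {f : E × 𝕜 → 𝕜} {f' : E × 𝕜 →L[𝕜] 𝕜} {a : E}
    {b : 𝕜} (hf : HasStrictFDerivAt f f' (a, b)) {α : Type*} {l : Filter α} {u : α → E}
    {v : α → 𝕜} (hu : Tendsto u l (𝓝 a)) (hv : Tendsto v l (𝓝[≠] b)) :
    Tendsto (fun x => (f (u x, b) - f (u x, v x)) / (b - v x)) l (𝓝 (f' (0, 1))) := by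
  have hpair : Tendsto (fun x => ((u x, b), (u x, v x))) l (𝓝 ((a, b), (a, b))) :=
    (hu.prodMk_nhds tendsto_const_nhds).prodMk_nhds
      (hu.prodMk_nhds (hv.mono_right nhdsWithin_le_nhds))
  have hincr : ∀ x, ((u x, b) - (u x, v x) : E × 𝕜) = (b - v x) • ((0 : E), (1 : 𝕜)) := by
    intro x; ext <;> simp
  have hrem : (fun x => f (u x, b) - f (u x, v x) - (b - v x) * f' (0, 1)) =o[l]
      fun x => b - v x := by
    refine ((hf.isLittleO.comp_tendsto hpair).trans_isBigO
      (Asymptotics.isBigO_of_le _ fun x => ?_)).congr_left fun x => ?_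
    · simp [hincr]
    · simp only [Function.comp_apply, hincr, map_smul, smul_eq_mul]
  have hne : ∀ᶠ x in l, b - v x ≠ 0 := by
    filter_upwards [hv self_mem_nhdsWithin] with x hx using sub_ne_zero.mpr (Ne.symm hx)
  refine tendsto_sub_nhds_zero_iff.mp (hrem.tendsto_div_nhds_zero.congr' ?_)
  filter_upwards [hne] with x hx
  field_simp

theorem ContDiffAt.tendsto_div_sq_iteratedDeriv_two {g : ℝ → ℝ} {x₀ : ℝ}
    (hg : ContDiffAt ℝ 2 g x₀) :
    Tendsto (fun t => (g t - g x₀ - deriv g x₀ * (t - x₀)) / (t - x₀) ^ 2) (𝓝[≠] x₀)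
      (𝓝 (iteratedDeriv 2 g x₀ / 2)) := by
  obtain ⟨u, hu, hgu⟩ := hg.contDiffOn (m := 2) le_rfl (by simp)
  obtain ⟨r, hr, hball⟩ := Metric.mem_nhds_iff.mp hu
  have hx₀ : x₀ ∈ Metric.ball x₀ r := Metric.mem_ball_self hr
  have htaylor := taylor_tendsto (n := 2) (convex_ball x₀ r) hx₀ (hgu.mono hball)
  rw [Metric.isOpen_ball.nhdsWithin_eq hx₀] at htaylor
  have hderiv : ∀ k, iteratedDerivWithin k g (Metric.ball x₀ r) x₀ = iteratedDeriv k g x₀ :=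
    fun k => iteratedDerivWithin_of_isOpen Metric.isOpen_ball hx₀
  have hlim := htaylor.add_const (iteratedDeriv 2 g x₀ / 2)
  rw [zero_add] at hlim
  refine (hlim.mono_left nhdsWithin_le_nhds).congr' ?_
  filter_upwards [self_mem_nhdsWithin] with t ht
  have ht : t - x₀ ≠ 0 := sub_ne_zero.mpr ht
  simp only [taylor_within_apply, Finset.sum_range_succ, Finset.sum_range_zero, hderiv,
    iteratedDeriv_zero, iteratedDeriv_one, smul_eq_mul]
  field_simp
  ring

theorem tendsto_sub_sq_div_of_tendsto_comp_div {α : Type*} {l : Filter α} {u ε : α → ℝ}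
    {h : ℝ → ℝ} {y₀ κ μ : ℝ} (hu : Tendsto u l (𝓝 y₀)) (h0 : h y₀ = 0)
    (hh : Tendsto (fun t => h t / (t - y₀) ^ 2) (𝓝[≠] y₀) (𝓝 κ)) (hκ : κ ≠ 0)
    (hε : Tendsto (fun x => h (u x) / ε x) l (𝓝 μ)) (hμ : μ ≠ 0) :
    Tendsto (fun x => (u x - y₀) ^ 2 / ε x) l (𝓝 (μ / κ)) := by
  have hne : ∀ᶠ x in l, h (u x) / ε x ≠ 0 := hε.eventually_ne hμ
  have hu' : Tendsto u l (𝓝[≠] y₀) := tendsto_nhdsWithin_iff.mpr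
    ⟨hu, hne.mono fun x hx hxy => hx (by rw [hxy, h0, zero_div])⟩
  refine (hε.div (hh.comp hu') hκ).congr' ?_
  filter_upwards [hne, hu' self_mem_nhdsWithin] with x hx hux
  have hux : u x - y₀ ≠ 0 := sub_ne_zero.mpr hux
  obtain ⟨hhu, hεx⟩ := div_ne_zero_iff.mp hx
  simp only [Pi.div_apply, Function.comp_apply]
  field_simp

theorem tendsto_sub_div_sqrt_one_sub_div {u : ℝ → ℝ} {y₀ z₀ L : ℝ} (hz₀ : 0 < z₀)
    (hu : ∀ᶠ z in 𝓝[<] z₀, u z ≤ y₀)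
    (h : Tendsto (fun z => (u z - y₀) ^ 2 / (z₀ - z)) (𝓝[<] z₀) (𝓝 L)) :
    Tendsto (fun z => (y₀ - u z) / √(1 - z / z₀)) (𝓝[<] z₀) (𝓝 √(z₀ * L)) := by
  refine ((Real.continuous_sqrt.tendsto _).comp (h.const_mul z₀)).congr' ?_
  filter_upwards [hu, self_mem_nhdsWithin] with z huz hz
  have hz' : 0 ≤ 1 - z / z₀ := by rw [sub_nonneg, div_le_one hz₀]; exact hz.le
  have hz : 0 < z₀ - z := sub_pos.mpr hz
  have harg : z₀ * ((u z - y₀) ^ 2 / (z₀ - z)) = (y₀ - u z) ^ 2 / (1 - z / z₀) := by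
    field_simp
    ring
  rw [Function.comp_apply, harg, Real.sqrt_div' _ hz', Real.sqrt_sq (by linarith)]

theorem square_root_singularity_of_functional_equation_general
    (F : ℝ → ℝ → ℝ) (c : ℕ → ℝ) (z₀ y₀ : ℝ)
    (hz₀ : 0 < z₀)
    (hc : ∀ n, 0 ≤ c n)
    (hrad : seriesRadius c = ENNReal.ofReal z₀)
    (Y : ℝ → ℝ) (hY : ∀ z, Y z = ∑' (n : ℕ), c n * z ^ n)
    -- F is analytic at (y₀, z₀):
    (hFanal : AnalyticAt ℝ (fun p : ℝ × ℝ => F p.1 p.2) (y₀, z₀))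
    -- functional equation on [0, z₀):
    (heq : ∀ z ∈ Ico 0 z₀, Y z = F (Y z) z)
    -- finite limit y₀ at the singularity:
    (hlim : Tendsto Y (𝓝[<] z₀) (𝓝 y₀))
    -- characteristic condition F_y(y₀;z₀) = 1 and nondegeneracy:
    (hFy : deriv (fun y => F y z₀) y₀ = 1)
    (hFyy : iteratedDeriv 2 (fun y => F y z₀) y₀ ≠ 0)
    (hFz : deriv (fun z => F y₀ z) z₀ ≠ 0) :
    Tendsto (fun z => (y₀ - Y z) / Real.sqrt (1 - z / z₀)) (𝓝[<] z₀)
      (𝓝 (Real.sqrt (2 * z₀ * deriv (fun z => F y₀ z) z₀ /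
        iteratedDeriv 2 (fun y => F y z₀) y₀))) := by
  have hIco : ∀ᶠ z in 𝓝[<] z₀, z ∈ Ico 0 z₀ := Ico_mem_nhdsLT hz₀
  have hfix : F y₀ z₀ = y₀ := by
    refine tendsto_nhds_unique (hFanal.continuousAt.tendsto.comp
      (hlim.prodMk_nhds (tendsto_id.mono_left nhdsWithin_le_nhds))) (hlim.congr' ?_)
    filter_upwards [hIco] with z hz using heq z hz
  have hslope : Tendsto (fun z => (F (Y z) z₀ - Y z) / (z₀ - z)) (𝓝[<] z₀)
      (𝓝 (deriv (fun z => F y₀ z) z₀)) := by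
    have hFz_eq :
        deriv (fun z => F y₀ z) z₀ = fderiv ℝ (fun p : ℝ × ℝ => F p.1 p.2) (y₀, z₀) (0, 1) :=
      (hFanal.differentiableAt.hasFDerivAt.comp_hasDerivAt z₀
        ((hasDerivAt_const z₀ y₀).prodMk (hasDerivAt_id z₀))).deriv
    rw [hFz_eq]
    refine (hFanal.hasStrictFDerivAt.tendsto_slope_snd hlim
      (tendsto_id.mono_left (nhdsLT_le_nhdsNE z₀))).congr' ?_
    filter_upwards [hIco] with z hz
    rw [id, ← heq z hz]
  have hquad : Tendsto (fun t => (F t z₀ - t) / (t - y₀) ^ 2) (𝓝[≠] y₀)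
      (𝓝 (iteratedDeriv 2 (fun y => F y z₀) y₀ / 2)) := by
    have hslice : ContDiffAt ℝ 2 (fun y => F y z₀) y₀ :=
      (hFanal.comp₂ analyticAt_id analyticAt_const).contDiffAt
    refine hslice.tendsto_div_sq_iteratedDeriv_two.congr fun t => ?_
    rw [hfix, hFy]
    ring
  have hsq := tendsto_sub_sq_div_of_tendsto_comp_div hlim (by simp [hfix]) hquad
    (div_ne_zero hFyy two_ne_zero) hslope hFz
  have hle : ∀ᶠ z in 𝓝[<] z₀, Y z ≤ y₀ := by
    have hmono : MonotoneOn Y (Ico 0 z₀) := by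
      simpa only [← hY] using monotoneOn_tsum_mul_pow hc hrad.ge
    filter_upwards [hIco] with z hz using hmono.le_of_tendsto_nhdsLT hlim z hz
  convert tendsto_sub_div_sqrt_one_sub_div hz₀ hle hsq using 3
  ring

/-- Square-root singularity of the solution of `y = F(y;z)` (real-variable
version of Drmota's theorem).  Let `F` be analytic at `(y₀,z₀)` with nonnegative Taylor
coefficients, `F(0;z₀) ≠ 0`, nonlinear in `y` (`F_yy(y₀;z₀) ≠ 0`), `F_z(y₀;z₀) ≠ 0`, and
let `Y(z) = Σ cₙ zⁿ` (nonnegative coefficients) satisfy `Y = F(Y;z)` on `[0,z₀)`, with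
radius of convergence `z₀` and finite limit `y₀ = Y(z₀⁻)`, where `F_y(y₀;z₀) = 1`.  Then
`y₀ − Y(z) ~ C·√(1 − z/z₀)` as `z → z₀⁻`, with
`C = √(2 z₀ F_z(y₀;z₀) / F_yy(y₀;z₀))`. -/
theorem square_root_singularity_of_functional_equation
    (F : ℝ → ℝ → ℝ) (c : ℕ → ℝ) (z₀ y₀ : ℝ)
    (hz₀ : 0 < z₀) (hy₀ : 0 < y₀)
    (hc : ∀ n, 0 ≤ c n)
    (hrad : seriesRadius c = ENNReal.ofReal z₀)
    (Y : ℝ → ℝ) (hY : ∀ z, Y z = ∑' (n : ℕ), c n * z ^ n)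
    -- F is analytic at (y₀, z₀):
    (hFanal : AnalyticAt ℝ (fun p : ℝ × ℝ => F p.1 p.2) (y₀, z₀))
    -- F has nonnegative Taylor coefficients (as a convergent double series on [0,y₀]×[0,z₀]):
    (hFnonneg : ∃ a : ℕ → ℕ → ℝ, (∀ n m, 0 ≤ a n m) ∧
      ∀ y z : ℝ, 0 ≤ y → y ≤ y₀ → 0 ≤ z → z ≤ z₀ →
        HasSum (fun p : ℕ × ℕ => a p.1 p.2 * y ^ p.1 * z ^ p.2) (F y z))
    (hF0 : F 0 z₀ ≠ 0)
    -- functional equation on [0, z₀):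
    (heq : ∀ z ∈ Ico 0 z₀, Y z = F (Y z) z)
    -- finite limit y₀ at the singularity:
    (hlim : Tendsto Y (𝓝[<] z₀) (𝓝 y₀))
    -- characteristic condition F_y(y₀;z₀) = 1 and nondegeneracy:
    (hFy : deriv (fun y => F y z₀) y₀ = 1)
    (hFyy : iteratedDeriv 2 (fun y => F y z₀) y₀ ≠ 0)
    (hFz : deriv (fun z => F y₀ z) z₀ ≠ 0) :
    Tendsto (fun z => (y₀ - Y z) / Real.sqrt (1 - z / z₀)) (𝓝[<] z₀)
      (𝓝 (Real.sqrt (2 * z₀ * deriv (fun z => F y₀ z) z₀ /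
        iteratedDeriv 2 (fun y => F y z₀) y₀))) :=
  square_root_singularity_of_functional_equation_general F c z₀ y₀ hz₀ hc hrad Y hY hFanal heq hlim
    hFy hFyy hFz
end
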